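/- arXiv:2504.04368 — 3 statements merged into one kernel-verified Lean document; each statement's English description precedes it below -/
import Mathlib

section
/- There exist a finite state space Ω with two states, acts f, g, h, f*, and a set Π of two information structures such that the JML preference (F ≿ G iff ∃π ∈ Π with b^u_F(π) ≥ b^u_G(π)) violates transitivity: {f} ∼ {g,h}, {f*} ∼ {g,h}, but {f*} ≻ {f}. -/
open MeasureTheory

structure Menu (Ω V : Type*) where
  acts : Finset (Ω → V)
  nonempty : acts.Nonempty

noncomputable def Menu.phi {Ω V : Type*} [Fintype Ω] (u : V → ℝ) (F : Menu Ω V)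
    (p : Ω → ℝ) : ℝ :=
  F.acts.sup' F.nonempty fun f => ∑ ω, u (f ω) * p ω

noncomputable def bval {Ω V : Type*} [Fintype Ω] (u : V → ℝ) (F : Menu Ω V)
    (π : Measure ↥(stdSimplex ℝ Ω)) : ℝ :=
  ∫ p, F.phi u (p : Ω → ℝ) ∂π

noncomputable def Menu.mix {Ω V : Type*} [AddCommMonoid V] [Module ℝ V]
    (α : ℝ) (F G : Menu Ω V) : Menu Ω V :=
  letI : DecidableEq (Ω → V) := Classical.decEq _
  ⟨(F.acts ×ˢ G.acts).image (fun fg ω => α • fg.1 ω + (1 - α) • fg.2 ω),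
   Finset.Nonempty.image (F.nonempty.product G.nonempty) _⟩

noncomputable def Menu.single {Ω V : Type*} (f : Ω → V) : Menu Ω V :=
  ⟨{f}, Finset.singleton_nonempty f⟩

noncomputable def Menu.pair {Ω V : Type*} (f g : Ω → V) : Menu Ω V :=
  letI : DecidableEq (Ω → V) := Classical.decEq _
  ⟨{f, g}, Finset.insert_nonempty f {g}⟩

/-- The JML relation for the two-element set of information structures {π₁, π₂},
with utility u = id on lottery-values in ℝ. -/
def Jrel (π₁ π₂ : Measure ↥(stdSimplex ℝ (Fin 2)))
    (F G : Menu (Fin 2) ℝ) : Prop :=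
  ∃ π ∈ ({π₁, π₂} : Set (Measure ↥(stdSimplex ℝ (Fin 2)))),
    bval (fun x : ℝ => x) G π ≤ bval (fun x : ℝ => x) F π

/-! The constant acts `f ≡ 2` and `f* ≡ 5/2` are worth their constant under every information
structure, while the menu of bets `{g, h}` is worth `3/2` without information and `3` under full
information. So each constant act is weakly preferred to `{g, h}` under no information and weakly
dispreferred under full information, hence indifferent to it, yet `f*` beats `f` under both. -/

open scoped ENNReal

namespace Menu

variable {Ω V : Type*} [Fintype Ω]

lemma phi_single (u : V → ℝ) (f : Ω → V) (p : Ω → ℝ) :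
    (single f).phi u p = ∑ ω, u (f ω) * p ω := by
  simp [single, phi]

lemma phi_pair (u : V → ℝ) (f g : Ω → V) (p : Ω → ℝ) :
    (pair f g).phi u p = max (∑ ω, u (f ω) * p ω) (∑ ω, u (g ω) * p ω) := by
  simp [pair, phi, Finset.sup'_insert]

lemma phi_single_const (u : V → ℝ) (v : V) (p : stdSimplex ℝ Ω) :
    (single fun _ : Ω => v).phi u p = u v := by
  simp [phi_single, ← Finset.mul_sum]

end Menu

section bval

variable {Ω V : Type*} [Fintype Ω]

lemma bval_single_const (u : V → ℝ) (v : V) (π : Measure (stdSimplex ℝ Ω))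
    [IsProbabilityMeasure π] : bval u (Menu.single fun _ : Ω => v) π = u v := by
  simp [bval, Menu.phi_single_const]

lemma bval_dirac (u : V → ℝ) (F : Menu Ω V) (p : stdSimplex ℝ Ω) :
    bval u F (Measure.dirac p) = F.phi u p :=
  integral_dirac _ _

lemma bval_half_dirac_add_dirac (u : V → ℝ) (F : Menu Ω V) (p q : stdSimplex ℝ Ω) :
    bval u F ((2⁻¹ : ℝ≥0∞) • (Measure.dirac p + Measure.dirac q)) =
      (F.phi u p + F.phi u q) / 2 := by
  rw [bval, integral_smul_measure, integral_add_measure (integrable_dirac (by simp))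
    (integrable_dirac (by simp)), integral_dirac, integral_dirac]
  simp [div_eq_inv_mul]

end bval

lemma Jrel_iff (π₁ π₂ : Measure (stdSimplex ℝ (Fin 2))) (F G : Menu (Fin 2) ℝ) :
    Jrel π₁ π₂ F G ↔
      bval (fun x => x) G π₁ ≤ bval (fun x => x) F π₁ ∨
        bval (fun x => x) G π₂ ≤ bval (fun x => x) F π₂ := by
  simp [Jrel]

noncomputable def uniformPoint (Ω : Type*) [Fintype Ω] [Nonempty Ω] : stdSimplex ℝ Ω :=
  ⟨fun _ => (Fintype.card Ω : ℝ)⁻¹, fun _ => by positivity, by simp⟩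

@[simp]
lemma uniformPoint_apply (Ω : Type*) [Fintype Ω] [Nonempty Ω] (ω : Ω) :
    uniformPoint Ω ω = (Fintype.card Ω : ℝ)⁻¹ :=
  rfl

noncomputable def noInformation : Measure (stdSimplex ℝ (Fin 2)) :=
  Measure.dirac (uniformPoint (Fin 2))

noncomputable def fullInformation : Measure (stdSimplex ℝ (Fin 2)) :=
  (2⁻¹ : ℝ≥0∞) • (Measure.dirac (stdSimplex.vertex 0) + Measure.dirac (stdSimplex.vertex 1))

instance : IsProbabilityMeasure noInformation := by
  unfold noInformation; infer_instance

instance : IsProbabilityMeasure fullInformation :=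
  ⟨by simp [fullInformation, ENNReal.inv_two_add_inv_two]⟩

lemma bval_bets_noInformation :
    bval (fun x => x) (Menu.pair ![3, 0] ![0, 3]) noInformation = 3 / 2 := by
  rw [noInformation, bval_dirac, Menu.phi_pair]
  norm_num [Fin.sum_univ_two]

lemma bval_bets_fullInformation :
    bval (fun x => x) (Menu.pair ![3, 0] ![0, 3]) fullInformation = 3 := by
  rw [fullInformation, bval_half_dirac_add_dirac, Menu.phi_pair, Menu.phi_pair]
  norm_num [Fin.sum_univ_two]

theorem stmt6 :
    ∃ (f g h fs : Fin 2 → ℝ) (π₁ π₂ : Measure ↥(stdSimplex ℝ (Fin 2))),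
      π₁ ≠ π₂ ∧ IsProbabilityMeasure π₁ ∧ IsProbabilityMeasure π₂ ∧
      -- {f} ∼ {g, h}
      (Jrel π₁ π₂ (Menu.single f) (Menu.pair g h) ∧
        Jrel π₁ π₂ (Menu.pair g h) (Menu.single f)) ∧
      -- {f*} ∼ {g, h}
      (Jrel π₁ π₂ (Menu.single fs) (Menu.pair g h) ∧
        Jrel π₁ π₂ (Menu.pair g h) (Menu.single fs)) ∧
      -- {f*} ≻ {f}
      (Jrel π₁ π₂ (Menu.single fs) (Menu.single f) ∧
        ¬ Jrel π₁ π₂ (Menu.single f) (Menu.single fs)) := by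
  refine ⟨fun _ => 2, ![3, 0], ![0, 3], fun _ => 5 / 2, noInformation, fullInformation,
    ?_, inferInstance, inferInstance, ?_⟩
  · refine ne_of_apply_ne (bval (fun x => x) (Menu.pair ![3, 0] ![0, 3])) ?_
    rw [bval_bets_noInformation, bval_bets_fullInformation]
    norm_num
  · simp only [Jrel_iff, bval_single_const, bval_bets_noInformation, bval_bets_fullInformation]
    norm_num
end

section
/- A JML preference satisfies favorable mixing monotonicity: for all menus F, G, H, H' and α ∈ [0,1], if F ≻ G and H ≻ H' then αF + (1-α)H ≻ αG + (1-α)H'. -/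
/-! Because `u` is affine and the weights are nonnegative, the maximum over the acts of a mixed
menu splits into the mixture of the two maxima, so `φ` and hence `b^u(π)` are affine in the menu.
Strict dominance at every `π ∈ Π` is therefore preserved by mixing, and `Π ≠ ∅` supplies the
weak comparison. -/

open MeasureTheory

theorem Finset.sup'_product_affine {β γ : Type*} {s : Finset β} {t : Finset γ}
    (hs : s.Nonempty) (ht : t.Nonempty) (f : β → ℝ) (g : γ → ℝ) {a b : ℝ}
    (ha : 0 ≤ a) (hb : 0 ≤ b) :
    (s ×ˢ t).sup' (hs.product ht) (fun x => a * f x.1 + b * g x.2) =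
      a * s.sup' hs f + b * t.sup' ht g := by
  apply le_antisymm
  · refine Finset.sup'_le _ _ fun x hx => ?_
    rw [Finset.mem_product] at hx
    gcongr
    · exact Finset.le_sup' f hx.1
    · exact Finset.le_sup' g hx.2
  · obtain ⟨i, hi, hfi⟩ := Finset.exists_mem_eq_sup' hs f
    obtain ⟨j, hj, hgj⟩ := Finset.exists_mem_eq_sup' ht g
    rw [hfi, hgj]
    exact Finset.le_sup' (fun x => a * f x.1 + b * g x.2) (Finset.mk_mem_product hi hj)

namespace Menu

variable {Ω V : Type*} [Fintype Ω]

theorem continuous_phi (u : V → ℝ) (F : Menu Ω V) : Continuous (F.phi u) :=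
  Continuous.finset_sup'_apply F.nonempty fun _ _ =>
    continuous_finsetSum _ fun ω _ => continuous_const.mul (continuous_apply ω)

theorem integrable_phi (u : V → ℝ) (F : Menu Ω V) (π : Measure ↥(stdSimplex ℝ Ω))
    [IsFiniteMeasure π] : Integrable (fun p : ↥(stdSimplex ℝ Ω) => F.phi u p) π :=
  ((F.continuous_phi u).comp continuous_subtype_val).integrable_of_hasCompactSupport
    (HasCompactSupport.of_compactSpace _)

variable [AddCommMonoid V] [Module ℝ V] {u : V → ℝ}

theorem phi_mix
    (hu : ∀ (x y : V) (a b : ℝ), a + b = 1 → u (a • x + b • y) = a * u x + b * u y)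
    {α : ℝ} (hα : α ∈ Set.Icc (0 : ℝ) 1) (F H : Menu Ω V) (p : Ω → ℝ) :
    (mix α F H).phi u p = α * F.phi u p + (1 - α) * H.phi u p := by
  -- the instance with which `mix` forms its image
  let : DecidableEq (Ω → V) := Classical.decEq _
  have expected_utility_mix (f h : Ω → V) :
      ∑ ω, u (α • f ω + (1 - α) • h ω) * p ω =
        α * ∑ ω, u (f ω) * p ω + (1 - α) * ∑ ω, u (h ω) * p ω := by
    simp only [hu _ _ α (1 - α) (add_sub_cancel α 1), Finset.mul_sum, ← Finset.sum_add_distrib]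
    exact Finset.sum_congr rfl fun ω _ => by ring
  unfold phi mix
  rw [Finset.sup'_image]
  simp only [Function.comp_def, expected_utility_mix]
  exact Finset.sup'_product_affine F.nonempty H.nonempty (fun f => ∑ ω, u (f ω) * p ω)
    (fun h => ∑ ω, u (h ω) * p ω) hα.1 (sub_nonneg.2 hα.2)

theorem bval_mix
    (hu : ∀ (x y : V) (a b : ℝ), a + b = 1 → u (a • x + b • y) = a * u x + b * u y)
    {α : ℝ} (hα : α ∈ Set.Icc (0 : ℝ) 1) (F H : Menu Ω V)
    (π : Measure ↥(stdSimplex ℝ Ω)) [IsFiniteMeasure π] :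
    bval u (mix α F H) π = α * bval u F π + (1 - α) * bval u H π := by
  simp only [bval, phi_mix hu hα]
  rw [integral_add ((F.integrable_phi u π).const_mul α) ((H.integrable_phi u π).const_mul _),
    integral_const_mul, integral_const_mul]

end Menu

theorem convex_combination_lt_convex_combination {a b c d α : ℝ} (hα : α ∈ Set.Icc (0 : ℝ) 1)
    (hab : a < b) (hcd : c < d) : α * a + (1 - α) * c < α * b + (1 - α) * d := by
  rcases hα.1.eq_or_lt with rfl | hα0
  · linarith
  · nlinarith [hα.2]

theorem stmt12 {Ω V : Type*} [Fintype Ω] [AddCommMonoid V] [Module ℝ V] (u : V → ℝ)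
    (hu : ∀ (x y : V) (a b : ℝ), a + b = 1 → u (a • x + b • y) = a * u x + b * u y)
    (Pi : Set (Measure ↥(stdSimplex ℝ Ω))) (hne : Pi.Nonempty)
    (hprob : ∀ π ∈ Pi, IsProbabilityMeasure π)
    (F G H H' : Menu Ω V) (α : ℝ) (hα : α ∈ Set.Icc (0 : ℝ) 1)
    (h1 : (∃ π ∈ Pi, bval u G π ≤ bval u F π) ∧ ¬ ∃ π ∈ Pi, bval u F π ≤ bval u G π)
    (h2 : (∃ π ∈ Pi, bval u H' π ≤ bval u H π) ∧ ¬ ∃ π ∈ Pi, bval u H π ≤ bval u H' π) :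
    (∃ π ∈ Pi, bval u (Menu.mix α G H') π ≤ bval u (Menu.mix α F H) π) ∧
      ¬ ∃ π ∈ Pi, bval u (Menu.mix α F H) π ≤ bval u (Menu.mix α G H') π := by
  have strict : ∀ π ∈ Pi, bval u (Menu.mix α G H') π < bval u (Menu.mix α F H) π := by
    intro π hπ
    have := hprob π hπ
    rw [Menu.bval_mix hu hα, Menu.bval_mix hu hα]
    exact convex_combination_lt_convex_combination hα
      (not_le.1 fun h => h1.2 ⟨π, hπ, h⟩) (not_le.1 fun h => h2.2 ⟨π, hπ, h⟩)
  obtain ⟨π₀, hπ₀⟩ := hne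
  exact ⟨⟨π₀, hπ₀, (strict π₀ hπ₀).le⟩, fun ⟨π, hπ, h⟩ => (strict π hπ).not_ge h⟩
end

section
/- Finite-dimensional JML duality: let K ⊆ ℝⁿ be a cone whose complement Kᶜ is a nonempty open convex cone containing the strictly negative orthant, and suppose K contains the nonnegative orthant. Then there exists a nonempty closed convex set Π of probability vectors in Δⁿ such that for all x ∈ ℝⁿ, x ∈ K if and only if there exists π ∈ Π with ⟨x, π⟩ ≥ 0. -/
/-!
Take `Π` to be the probability vectors that are nonpositive on `Kᶜ`. For `x ∈ K`, separating `x`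
from the open convex cone `Kᶜ` gives a functional that is `≤ 0` on `Kᶜ` and `≥ 0` at `x`; since it
is `≤ 0` on the negative orthant its coefficient vector is nonnegative, and normalizing that vector
gives a point of `Π`. Conversely a nonzero functional that is `≤ 0` on the open set `Kᶜ` is `< 0`
there, so `⟨x, π⟩ < 0` for `x ∉ K` and `π ∈ Π`. Finally `Π ≠ ∅` because `0 ∈ K`.
-/

open Set

theorem nonpos_and_nonneg_of_forall_pos_mul_lt {a b : ℝ} (h : ∀ c : ℝ, 0 < c → c * a < b) :
    a ≤ 0 ∧ 0 ≤ b := by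
  constructor
  · by_contra! ha
    have hlt := h ((|b| + 1) / a) (by positivity)
    rw [div_mul_cancel₀ _ ha.ne'] at hlt
    linarith [le_abs_self b]
  · by_contra! hb
    have ha : a < 0 := by linarith [h 1 one_pos, one_mul a]
    have hlt := h (b / (2 * a)) (div_pos_of_neg_of_neg hb (by linarith))
    rw [div_mul_eq_mul_div, mul_div_mul_right _ _ ha.ne] at hlt
    linarith

section OpenConvexCone

variable {E : Type*} [AddCommGroup E] [Module ℝ E] [TopologicalSpace E]

theorem ContinuousLinearMap.apply_lt_zero_of_isOpen [ContinuousAdd E] [ContinuousSMul ℝ E]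
    {f : StrongDual ℝ E} (hf : f ≠ 0) {U : Set E} (hU : IsOpen U) (hfU : ∀ a ∈ U, f a ≤ 0)
    {a : E} (ha : a ∈ U) : f a < 0 := by
  have hsub : f '' U ⊆ interior (Iic 0) :=
    interior_maximal (image_subset_iff.2 hfU) (f.isOpenMap_of_ne_zero hf U hU)
  simpa using hsub (mem_image_of_mem f ha)

theorem geometric_hahn_banach_open_cone_point [IsTopologicalAddGroup E]
    [ContinuousSMul ℝ E] [LocallyConvexSpace ℝ E] {C : Set E} (hC_open : IsOpen C)
    (hC_conv : Convex ℝ C) (hC_cone : ∀ a ∈ C, ∀ c : ℝ, 0 < c → c • a ∈ C)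
    (hC_ne : C.Nonempty) {x : E} (hx : x ∉ C) :
    ∃ f : StrongDual ℝ E, f ≠ 0 ∧ (∀ a ∈ C, f a ≤ 0) ∧ 0 ≤ f x := by
  obtain ⟨f, hf⟩ := geometric_hahn_banach_open_point hC_conv hC_open hx
  have key : ∀ a ∈ C, f a ≤ 0 ∧ 0 ≤ f x := fun a ha =>
    nonpos_and_nonneg_of_forall_pos_mul_lt fun c hc => by simpa using hf _ (hC_cone a ha c hc)
  obtain ⟨a, ha⟩ := hC_ne
  refine ⟨f, ?_, fun a ha => (key a ha).1, (key a ha).2⟩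
  rintro rfl
  simpa using hf a ha

end OpenConvexCone

theorem closure_setOf_forall_lt_zero {ι : Type*} :
    closure {x : ι → ℝ | ∀ i, x i < 0} = {x | ∀ i, x i ≤ 0} := by
  simpa [Set.pi, closure_Iio] using closure_pi_set (univ : Set ι) (fun _ => Iio (0 : ℝ))

section Coordinates

variable {ι : Type*} [Fintype ι]

theorem exists_pos_smul_mem_stdSimplex {p : ι → ℝ} (hp : 0 ≤ p) (hp0 : p ≠ 0) :
    ∃ c : ℝ, 0 < c ∧ c • p ∈ stdSimplex ℝ ι := by
  have hsum : 0 < ∑ i, p i := by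
    obtain ⟨i, hi⟩ := Function.ne_iff.1 hp0
    exact Finset.sum_pos' (fun j _ => hp j) ⟨i, Finset.mem_univ i, (hp i).lt_of_ne' hi⟩
  refine ⟨(∑ i, p i)⁻¹, inv_pos.2 hsum, fun i => mul_nonneg (inv_nonneg.2 hsum.le) (hp i), ?_⟩
  simp [← Finset.mul_sum, hsum.ne']

def simplexPolar (C : Set (ι → ℝ)) : Set (ι → ℝ) :=
  stdSimplex ℝ ι ∩ ⋂ y ∈ C, {π | y ⬝ᵥ π ≤ 0}

theorem mem_simplexPolar {C : Set (ι → ℝ)} {π : ι → ℝ} :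
    π ∈ simplexPolar C ↔ π ∈ stdSimplex ℝ ι ∧ ∀ y ∈ C, y ⬝ᵥ π ≤ 0 := by
  simp [simplexPolar]

theorem isClosed_simplexPolar (C : Set (ι → ℝ)) : IsClosed (simplexPolar C) :=
  (isClosed_stdSimplex ℝ ι).inter <| isClosed_biInter fun _ _ =>
    isClosed_le (continuous_const.dotProduct continuous_id) continuous_const

theorem convex_simplexPolar (C : Set (ι → ℝ)) : Convex ℝ (simplexPolar C) :=
  (convex_stdSimplex ℝ ι).inter <| convex_iInter₂ fun y _ =>
    convex_halfSpace_le (dotProductBilin ℝ ℝ y).isLinear 0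

theorem dotProduct_lt_zero_of_mem_simplexPolar {C : Set (ι → ℝ)} (hC : IsOpen C) {π y : ι → ℝ}
    (hπ : π ∈ simplexPolar C) (hy : y ∈ C) : y ⬝ᵥ π < 0 := by
  classical
  rw [mem_simplexPolar] at hπ
  let f : StrongDual ℝ (ι → ℝ) := LinearMap.toContinuousLinearMap (dotProductEquiv ℝ ι π)
  have hf (z : ι → ℝ) : f z = z ⬝ᵥ π := dotProduct_comm π z
  have hf0 : f ≠ 0 := fun h => by
    simpa [hf, dotProduct, hπ.1.2] using congr($h 1)
  simpa only [hf] using f.apply_lt_zero_of_isOpen hf0 hC (fun a ha => (hf a).symm ▸ hπ.2 a ha) hy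

theorem exists_mem_simplexPolar_of_notMem {C : Set (ι → ℝ)} (hC_open : IsOpen C)
    (hC_conv : Convex ℝ C) (hC_cone : ∀ a ∈ C, ∀ c : ℝ, 0 < c → c • a ∈ C)
    (hC_neg : {x : ι → ℝ | ∀ i, x i < 0} ⊆ C) {x : ι → ℝ} (hx : x ∉ C) :
    ∃ π ∈ simplexPolar C, 0 ≤ x ⬝ᵥ π := by
  classical
  obtain ⟨f, hf0, hfC, hfx⟩ := geometric_hahn_banach_open_cone_point hC_open hC_conv
    hC_cone ⟨fun _ => -1, hC_neg fun _ => neg_one_lt_zero⟩ hx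
  set p := (dotProductEquiv ℝ ι).symm f.toLinearMap with hp_def
  have hf (z : ι → ℝ) : f z = z ⬝ᵥ p := by
    rw [dotProduct_comm]
    exact congr($((dotProductEquiv ℝ ι).apply_symm_apply f.toLinearMap) z).symm
  have hp : 0 ≤ p := fun i => by
    have hfN : closure {x : ι → ℝ | ∀ i, x i < 0} ⊆ {z | f z ≤ 0} :=
      closure_minimal (hC_neg.trans hfC) (isClosed_le f.continuous continuous_const)
    rw [closure_setOf_forall_lt_zero] at hfN
    have hfi : f (-Pi.single i 1) ≤ 0 := hfN fun j => by
      by_cases hj : j = i <;> simp [hj]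
    simpa [hp_def] using hfi
  have hp0 : p ≠ 0 := fun h => hf0 (ContinuousLinearMap.ext fun z => by simp [hf, h])
  obtain ⟨c, hc, hcp⟩ := exists_pos_smul_mem_stdSimplex hp hp0
  refine ⟨c • p, mem_simplexPolar.2 ⟨hcp, fun y hy => ?_⟩, ?_⟩
  · rw [dotProduct_smul, smul_eq_mul, ← hf]
    exact mul_nonpos_of_nonneg_of_nonpos hc.le (hfC y hy)
  · rw [dotProduct_smul, smul_eq_mul, ← hf]
    exact mul_nonneg hc.le hfx

end Coordinates

theorem stmt19_general (n : ℕ) (K : Set (Fin n → ℝ))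
    (hpos : {x : Fin n → ℝ | ∀ i, 0 ≤ x i} ⊆ K)
    (hKc_open : IsOpen Kᶜ) (hKc_conv : Convex ℝ Kᶜ)
    (hKc_cone : ∀ x ∈ Kᶜ, ∀ c : ℝ, 0 < c → c • x ∈ Kᶜ)
    (hKc_neg : {x : Fin n → ℝ | ∀ i, x i < 0} ⊆ Kᶜ) :
    ∃ Pi : Set (Fin n → ℝ), Pi.Nonempty ∧ IsClosed Pi ∧ Convex ℝ Pi ∧
      Pi ⊆ stdSimplex ℝ (Fin n) ∧
      ∀ x : Fin n → ℝ, x ∈ K ↔ ∃ π ∈ Pi, 0 ≤ ∑ i, x i * π i := by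
  have hsep (x : Fin n → ℝ) (hx : x ∈ K) : ∃ π ∈ simplexPolar Kᶜ, 0 ≤ x ⬝ᵥ π :=
    exists_mem_simplexPolar_of_notMem hKc_open hKc_conv hKc_cone hKc_neg (not_not.2 hx)
  obtain ⟨π₀, hπ₀, -⟩ := hsep 0 (hpos fun _ => le_rfl)
  refine ⟨simplexPolar Kᶜ, ⟨π₀, hπ₀⟩, isClosed_simplexPolar _, convex_simplexPolar _,
    inter_subset_left, fun x => ⟨hsep x, ?_⟩⟩
  rintro ⟨π, hπ, hxπ⟩
  by_contra hx
  exact (dotProduct_lt_zero_of_mem_simplexPolar hKc_open hπ hx).not_ge hxπ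

theorem stmt19 (n : ℕ) (K : Set (Fin n → ℝ))
    (hpos : {x : Fin n → ℝ | ∀ i, 0 ≤ x i} ⊆ K)
    (hKc_ne : Kᶜ.Nonempty) (hKc_open : IsOpen Kᶜ) (hKc_conv : Convex ℝ Kᶜ)
    (hKc_cone : ∀ x ∈ Kᶜ, ∀ c : ℝ, 0 < c → c • x ∈ Kᶜ)
    (hKc_neg : {x : Fin n → ℝ | ∀ i, x i < 0} ⊆ Kᶜ) :
    ∃ Pi : Set (Fin n → ℝ), Pi.Nonempty ∧ IsClosed Pi ∧ Convex ℝ Pi ∧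
      Pi ⊆ stdSimplex ℝ (Fin n) ∧
      ∀ x : Fin n → ℝ, x ∈ K ↔ ∃ π ∈ Pi, 0 ≤ ∑ i, x i * π i :=
  stmt19_general n K hpos hKc_open hKc_conv hKc_cone hKc_neg
end
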